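/- arXiv:1105.3334 — 6 statements merged into one kernel-verified Lean document; each statement's English description precedes it below -/
import Mathlib

section
/- For any real c < 2, any continuously differentiable function y = g(x) defined on a subinterval of (0,1) whose graph satisfies x² + y² − 1 + c(x−1)(y−1) = 0 is a solution of the differential equation y′·(1−x)·(x−y+1) + (1−y)·(y−x+1) = 0. -/
/-!
Differentiating `F(x, g x) = 0` for `F(x, y) = x² + y² − 1 + c(x−1)(y−1)` gives
`∂ₓF + ∂ᵧF · g' = 0`. On the curve, `∂ᵧF = 2y + c(x−1)` vanishes only where `x² = (y−1)²`,
i.e. on the lines `y = 1 ∓ x`, which forces `c = 2` or `c = 2(1+x)/(1−x) > 2`; so for `c < 2`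
and `0 < x < 1` one may multiply the ODE by `∂ᵧF`, and then it is a combination of the
differentiated equation and `F = 0`.
-/

namespace ImplicitCurve

def curve (c x y : ℝ) : ℝ := x ^ 2 + y ^ 2 - 1 + c * (x - 1) * (y - 1)

theorem hasDerivAt_curve_comp {c x g' : ℝ} {g : ℝ → ℝ} (hg : HasDerivAt g g' x) :
    HasDerivAt (fun t => curve c t (g t))
      ((2 * x + c * (g x - 1)) + (2 * g x + c * (x - 1)) * g') x := by
  have h := ((((hasDerivAt_id x).pow 2).add (hg.pow 2)).sub_const 1).add
    ((((hasDerivAt_id x).sub_const 1).const_mul c).mul (hg.sub_const 1))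
  exact h.congr_deriv (by simp only [id_eq, Nat.cast_ofNat, Nat.add_one_sub_one, pow_one]; ring)

theorem curve_partial_y_ne_zero {c x y : ℝ} (hc : c < 2) (hx0 : 0 < x) (hx1 : x < 1)
    (hxy : curve c x y = 0) : 2 * y + c * (x - 1) ≠ 0 := by
  intro h
  have hlines : (y - (1 - x)) * (y - (1 + x)) = 0 := by
    unfold curve at hxy
    linear_combination -hxy + (y - 1) * h
  rcases mul_eq_zero.1 hlines with hy | hy
  · nlinarith
  · nlinarith

theorem ode_of_implicit_derivative {c x y y' : ℝ} (hxy : curve c x y = 0)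
    (hD : (2 * x + c * (y - 1)) + (2 * y + c * (x - 1)) * y' = 0)
    (hFy : 2 * y + c * (x - 1) ≠ 0) :
    y' * (1 - x) * (x - y + 1) + (1 - y) * (y - x + 1) = 0 := by
  refine (mul_eq_zero.1 ?_).resolve_right hFy
  unfold curve at hxy
  linear_combination (1 - x) * (x - y + 1) * hD + 2 * (x - y) * hxy

end ImplicitCurve

open ImplicitCurve in
theorem stmt_1_general (c : ℝ) (hc : c < 2) (a b : ℝ)
    (hab : Set.Ioo a b ⊆ Set.Ioo (0 : ℝ) 1)
    (g g' : ℝ → ℝ)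
    (hg : ∀ x ∈ Set.Ioo a b, HasDerivAt g (g' x) x)
    (hcurve : ∀ x ∈ Set.Ioo a b,
      x ^ 2 + (g x) ^ 2 - 1 + c * (x - 1) * (g x - 1) = 0) :
    ∀ x ∈ Set.Ioo a b,
      g' x * (1 - x) * (x - g x + 1) + (1 - g x) * (g x - x + 1) = 0 := by
  intro x hx
  obtain ⟨hx0, hx1⟩ := hab hx
  have hconst : (fun t => curve c t (g t)) =ᶠ[nhds x] fun _ => 0 :=
    Filter.eventually_of_mem (isOpen_Ioo.mem_nhds hx) hcurve
  have hD := (hasDerivAt_curve_comp (hg x hx)).unique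
    ((hasDerivAt_const x (0 : ℝ)).congr_of_eventuallyEq hconst)
  exact ode_of_implicit_derivative (hcurve x hx) hD
    (curve_partial_y_ne_zero hc hx0 hx1 (hcurve x hx))

theorem stmt_1 (c : ℝ) (hc : c < 2) (a b : ℝ)
    (hab : Set.Ioo a b ⊆ Set.Ioo (0 : ℝ) 1)
    (g g' : ℝ → ℝ)
    (hg : ∀ x ∈ Set.Ioo a b, HasDerivAt g (g' x) x)
    (hcont : ContinuousOn g' (Set.Ioo a b))
    (hcurve : ∀ x ∈ Set.Ioo a b,
      x ^ 2 + (g x) ^ 2 - 1 + c * (x - 1) * (g x - 1) = 0) :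
    ∀ x ∈ Set.Ioo a b,
      g' x * (1 - x) * (x - g x + 1) + (1 - g x) * (g x - x + 1) = 0 :=
  stmt_1_general c hc a b hab g g' hg hcurve
end

section
/- Let F(x,y) be a continuously differentiable potential function of the 1-form (x²+y²−1)^{−3/2}(1−y)(y−x+1) dx + (x²+y²−1)^{−3/2}(1−x)(x−y+1) dy on a region where x²+y² > 1. Then every level curve of F satisfies (1−c̄²)x² + (1−c̄²)y² + 2xy − 2x − 2y + 1 + c̄² = 0 for some constant c̄ ∈ ℝ. -/
/-!
The function `(1 - x - y) / √(x² + y² - 1)` is itself a potential of the form, as a direct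
differentiation shows. Two potentials differ by a function whose partial derivatives vanish, and
such a function is constant on `Wplus`, because any two points of `Wplus` are joined inside it by
a vertical, a horizontal and a vertical segment. Hence on a level set of `F` the quotient
`(1 - x - y) / √(x² + y² - 1)` takes a single value `c̄`, and squaring gives the conic.
-/

open Set

/-- The region W⁺ = {(x,y) : x < 1, y < 1, x + y > 1, x² + y² > 1}. -/
def Wplus : Set (ℝ × ℝ) :=
  {p | p.1 < 1 ∧ p.2 < 1 ∧ 1 < p.1 + p.2 ∧ 1 < p.1 ^ 2 + p.2 ^ 2}

/-- The dx-coefficient of the 1-form. -/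
noncomputable def Pcoef (p : ℝ × ℝ) : ℝ :=
  (p.1 ^ 2 + p.2 ^ 2 - 1) ^ (-(3 / 2 : ℝ)) * (1 - p.2) * (p.2 - p.1 + 1)

/-- The dy-coefficient of the 1-form. -/
noncomputable def Qcoef (p : ℝ × ℝ) : ℝ :=
  (p.1 ^ 2 + p.2 ^ 2 - 1) ^ (-(3 / 2 : ℝ)) * (1 - p.1) * (p.1 - p.2 + 1)

noncomputable def explicitPotential (p : ℝ × ℝ) : ℝ :=
  (1 - p.1 - p.2) * (p.1 ^ 2 + p.2 ^ 2 - 1) ^ (-(1 / 2 : ℝ))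

lemma hasDerivAt_explicitPotential_slice {a b : ℝ} (h : a ^ 2 + b ^ 2 ≠ 1) :
    HasDerivAt (fun t => (1 - t - b) * (t ^ 2 + b ^ 2 - 1) ^ (-(1 / 2 : ℝ)))
      ((a ^ 2 + b ^ 2 - 1) ^ (-(3 / 2 : ℝ)) * (1 - b) * (b - a + 1)) a := by
  have hs : a ^ 2 + b ^ 2 - 1 ≠ 0 := sub_ne_zero.mpr h
  have hbase : HasDerivAt (fun t => t ^ 2 + b ^ 2 - 1) (2 * a) a := by
    simpa using ((hasDerivAt_pow 2 a).add_const (b ^ 2)).sub_const 1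
  have hlin : HasDerivAt (fun t => 1 - t - b) (-1) a := by
    simpa using ((hasDerivAt_id a).const_sub 1).sub_const b
  refine (hlin.mul (hbase.rpow_const (p := -(1 / 2 : ℝ)) (Or.inl hs))).congr_deriv ?_
  have hpow : (a ^ 2 + b ^ 2 - 1) ^ (-(1 / 2 : ℝ)) =
      (a ^ 2 + b ^ 2 - 1) ^ (-(3 / 2 : ℝ)) * (a ^ 2 + b ^ 2 - 1) := by
    rw [← Real.rpow_add_one hs]; norm_num
  rw [hpow, show -(1 / 2 : ℝ) - 1 = -(3 / 2) by norm_num]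
  ring

lemma hasDerivAt_explicitPotential_fst {p : ℝ × ℝ} (h : p.1 ^ 2 + p.2 ^ 2 ≠ 1) :
    HasDerivAt (fun x => explicitPotential (x, p.2)) (Pcoef p) p.1 :=
  hasDerivAt_explicitPotential_slice h

lemma hasDerivAt_explicitPotential_snd {p : ℝ × ℝ} (h : p.1 ^ 2 + p.2 ^ 2 ≠ 1) :
    HasDerivAt (fun y => explicitPotential (p.1, y)) (Qcoef p) p.2 := by
  convert hasDerivAt_explicitPotential_slice (a := p.2) (b := p.1) (by rwa [add_comm]) using 1
  · ext y; simp only [explicitPotential]; ring_nf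
  · simp only [Qcoef]; ring_nf

lemma mk_mem_Wplus_of_fst_le {x₁ x₂ y : ℝ} (h : (x₁, y) ∈ Wplus) (hle : x₁ ≤ x₂)
    (hx₂ : x₂ < 1) :
    (x₂, y) ∈ Wplus := by
  obtain ⟨-, hy, hsum, hsq⟩ := h
  have hx₁ : 0 < x₁ := by linarith
  exact ⟨hx₂, hy, by linarith, by nlinarith⟩

lemma mk_mem_Wplus_of_snd_le {x y₁ y₂ : ℝ} (h : (x, y₁) ∈ Wplus) (hle : y₁ ≤ y₂)
    (hy₂ : y₂ < 1) :
    (x, y₂) ∈ Wplus := by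
  obtain ⟨hx, -, hsum, hsq⟩ := h
  have hy₁ : 0 < y₁ := by linarith
  exact ⟨hx, hy₂, by linarith, by nlinarith⟩

lemma eq_of_hasDerivAt_zero_Icc {g : ℝ → ℝ} {a b : ℝ} (hab : a ≤ b)
    (hg : ∀ t ∈ Icc a b, HasDerivAt g 0 t) : g b = g a :=
  constant_of_has_deriv_right_zero (fun t ht => (hg t ht).continuousAt.continuousWithinAt)
    (fun t ht => (hg t (Ico_subset_Icc_self ht)).hasDerivWithinAt) b ⟨hab, le_rfl⟩

section Staircase

variable {H : ℝ × ℝ → ℝ}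

lemma Wplus.apply_eq_of_fst_le (hH : ∀ p ∈ Wplus, HasDerivAt (fun x => H (x, p.2)) 0 p.1)
    {x₁ x₂ y : ℝ} (h : (x₁, y) ∈ Wplus) (hle : x₁ ≤ x₂) (hx₂ : x₂ < 1) :
    H (x₂, y) = H (x₁, y) :=
  eq_of_hasDerivAt_zero_Icc (g := fun t => H (t, y)) hle fun t ht =>
    hH (t, y) (mk_mem_Wplus_of_fst_le h ht.1 (ht.2.trans_lt hx₂))

lemma Wplus.apply_eq_of_snd_le (hH : ∀ p ∈ Wplus, HasDerivAt (fun y => H (p.1, y)) 0 p.2)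
    {x y₁ y₂ : ℝ} (h : (x, y₁) ∈ Wplus) (hle : y₁ ≤ y₂) (hy₂ : y₂ < 1) :
    H (x, y₂) = H (x, y₁) :=
  eq_of_hasDerivAt_zero_Icc (g := fun t => H (x, t)) hle fun t ht =>
    hH (x, t) (mk_mem_Wplus_of_snd_le h ht.1 (ht.2.trans_lt hy₂))

lemma Wplus.apply_eq_of_hasDerivAt_zero
    (hx : ∀ p ∈ Wplus, HasDerivAt (fun x => H (x, p.2)) 0 p.1)
    (hy : ∀ p ∈ Wplus, HasDerivAt (fun y => H (p.1, y)) 0 p.2)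
    {p q : ℝ × ℝ} (hp : p ∈ Wplus) (hq : q ∈ Wplus) : H p = H q := by
  set h := max p.2 q.2
  have hh : h < 1 := max_lt hp.2.1 hq.2.1
  have hph : (p.1, h) ∈ Wplus := mk_mem_Wplus_of_snd_le hp (le_max_left _ _) hh
  have hqh : (q.1, h) ∈ Wplus := mk_mem_Wplus_of_snd_le hq (le_max_right _ _) hh
  have hp_up : H (p.1, h) = H p := Wplus.apply_eq_of_snd_le hy hp (le_max_left _ _) hh
  have hq_up : H (q.1, h) = H q := Wplus.apply_eq_of_snd_le hy hq (le_max_right _ _) hh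
  have hacross : H (p.1, h) = H (q.1, h) := by
    rcases le_total p.1 q.1 with hle | hle
    · exact (Wplus.apply_eq_of_fst_le hx hph hle hq.1).symm
    · exact Wplus.apply_eq_of_fst_le hx hqh hle hp.1
  rw [← hp_up, ← hq_up, hacross]

end Staircase

lemma conic_of_explicitPotential_eq {p : ℝ × ℝ} (hp : 1 < p.1 ^ 2 + p.2 ^ 2) {c : ℝ}
    (hc : explicitPotential p = c) :
    (1 - c ^ 2) * p.1 ^ 2 + (1 - c ^ 2) * p.2 ^ 2 + 2 * p.1 * p.2
      - 2 * p.1 - 2 * p.2 + 1 + c ^ 2 = 0 := by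
  have hs : 0 < p.1 ^ 2 + p.2 ^ 2 - 1 := by linarith
  have hsq : ((p.1 ^ 2 + p.2 ^ 2 - 1) ^ (-(1 / 2 : ℝ))) ^ 2 = (p.1 ^ 2 + p.2 ^ 2 - 1)⁻¹ := by
    rw [← Real.rpow_natCast, ← Real.rpow_mul hs.le]; norm_num [Real.rpow_neg_one]
  have hc2 : (1 - p.1 - p.2) ^ 2 = c ^ 2 * (p.1 ^ 2 + p.2 ^ 2 - 1) := by
    rw [← hc, explicitPotential, mul_pow, hsq, mul_assoc, inv_mul_cancel₀ hs.ne', mul_one]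
  linear_combination hc2

theorem stmt_2_general (F : ℝ × ℝ → ℝ)
    (hFx : ∀ p ∈ Wplus, HasDerivAt (fun x : ℝ => F (x, p.2)) (Pcoef p) p.1)
    (hFy : ∀ p ∈ Wplus, HasDerivAt (fun y : ℝ => F (p.1, y)) (Qcoef p) p.2) :
    ∀ v : ℝ, ∃ cb : ℝ, ∀ p ∈ Wplus, F p = v →
      (1 - cb ^ 2) * p.1 ^ 2 + (1 - cb ^ 2) * p.2 ^ 2 + 2 * p.1 * p.2
        - 2 * p.1 - 2 * p.2 + 1 + cb ^ 2 = 0 := by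
  have hne {p : ℝ × ℝ} (hp : p ∈ Wplus) : p.1 ^ 2 + p.2 ^ 2 ≠ 1 := hp.2.2.2.ne'
  have hconst {p q : ℝ × ℝ} (hp : p ∈ Wplus) (hq : q ∈ Wplus) :
      F p - explicitPotential p = F q - explicitPotential q :=
    Wplus.apply_eq_of_hasDerivAt_zero (H := fun q => F q - explicitPotential q)
      (fun p hp => ((hFx p hp).sub (hasDerivAt_explicitPotential_fst (hne hp))).congr_deriv
        (sub_self _))
      (fun p hp => ((hFy p hp).sub (hasDerivAt_explicitPotential_snd (hne hp))).congr_deriv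
        (sub_self _))
      hp hq
  intro v
  by_cases hv : ∃ p₀ ∈ Wplus, F p₀ = v
  · obtain ⟨p₀, hp₀, rfl⟩ := hv
    refine ⟨explicitPotential p₀, fun p hp hFp => conic_of_explicitPotential_eq hp.2.2.2 ?_⟩
    linarith [hconst hp hp₀]
  · exact ⟨0, fun p hp hFp => absurd ⟨p, hp, hFp⟩ hv⟩

theorem stmt_2 (F : ℝ × ℝ → ℝ)
    (hF : ContDiffOn ℝ 1 F Wplus)
    (hFx : ∀ p ∈ Wplus, HasDerivAt (fun x : ℝ => F (x, p.2)) (Pcoef p) p.1)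
    (hFy : ∀ p ∈ Wplus, HasDerivAt (fun y : ℝ => F (p.1, y)) (Qcoef p) p.2) :
    ∀ v : ℝ, ∃ cb : ℝ, ∀ p ∈ Wplus, F p = v →
      (1 - cb ^ 2) * p.1 ^ 2 + (1 - cb ^ 2) * p.2 ^ 2 + 2 * p.1 * p.2
        - 2 * p.1 - 2 * p.2 + 1 + cb ^ 2 = 0 :=
  stmt_2_general F hFx hFy
end

section
/- Let G ∈ 𝓕 be an arc (with endpoints (0,1) and (1,0), contained in the triangle W, obtained as an arc of the boundary of a strictly convex smooth disk supported by the half-planes x ≤ 1 and y ≤ 1) that is an integral curve of y′(1−x)(x−y+1) + (1−y)(y−x+1) = 0 on 0 < x < 1. Then G is a conic section arc satisfying x² + y² − 1 + c(x−1)(y−1) = 0 for some real c < 2. -/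
/-- A convex body `K ⊆ ℝ²` is smooth if at every boundary point there is a unique
(normalized) supporting linear functional. -/
def SmoothBody (K : Set (ℝ × ℝ)) : Prop :=
  ∀ p ∈ frontier K, ∃! f : (ℝ × ℝ) →L[ℝ] ℝ, ‖f‖ = 1 ∧ ∀ z ∈ K, f z ≤ f p

/-!
Put `u = x² + y² - 1` and `v = (x - 1)(y - 1)`. Along any curve `y = g(x)`, the Wronskian
`u'v - uv'` factors as `(x + y - 1)` times the left-hand side of the differential equation, so
on an integral curve inside `W`, where `v > 0`, the ratio `u / v` is constant; its negative is
the `c` of the conic. At a point of `W`, `c < 2` is the inequality `(x + y - 1)² > 0`.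
-/

open Set

theorem IsOpen.eq_div_mul_of_wronskian_eq_zero {𝕜 : Type*} [RCLike 𝕜]
    {s : Set 𝕜} (hs : IsOpen s) (hs' : IsPreconnected s) {u v u' v' : 𝕜 → 𝕜}
    (hu : ∀ x ∈ s, HasDerivAt u (u' x) x) (hv : ∀ x ∈ s, HasDerivAt v (v' x) x)
    (hv0 : ∀ x ∈ s, v x ≠ 0) (hw : ∀ x ∈ s, u' x * v x - u x * v' x = 0)
    {t : 𝕜} (ht : t ∈ s) : ∀ x ∈ s, u x = u t / v t * v x := by
  have hratio : ∀ x ∈ s, HasDerivAt (u / v) 0 x := fun x hx => by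
    simpa [hw x hx] using (hu x hx).div (hv x hx) (hv0 x hx)
  intro x hx
  have hconst : u x / v x = u t / v t :=
    hs.is_const_of_deriv_eq_zero hs'
      (fun y hy => (hratio y hy).differentiableAt.differentiableWithinAt)
      (fun y hy => (hratio y hy).deriv) hx ht
  rw [← hconst, div_mul_cancel₀ _ (hv0 x hx)]

theorem conic_wronskian (x y y' : ℝ) :
    (2 * x + 2 * y * y') * ((x - 1) * (y - 1)) - (x ^ 2 + y ^ 2 - 1) * ((y - 1) + (x - 1) * y') =
      (x + y - 1) * (y' * (1 - x) * (x - y + 1) + (1 - y) * (y - x + 1)) := by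
  ring

theorem neg_div_lt_two_of_mem_triangle {x y : ℝ} (hx : x < 1) (hy : y < 1) (hxy : 1 < x + y) :
    -((x ^ 2 + y ^ 2 - 1) / ((x - 1) * (y - 1))) < 2 := by
  have hv : 0 < (x - 1) * (y - 1) := mul_pos_of_neg_of_neg (by linarith) (by linarith)
  rw [neg_lt, lt_div_iff₀ hv]
  nlinarith [sq_pos_of_pos (show 0 < x + y - 1 by linarith)]

theorem stmt_8_general (g : ℝ → ℝ)
    (hg0 : g 0 = 1) (hg1 : g 1 = 0)
    (hW : ∀ x ∈ Set.Ioo (0 : ℝ) 1, x < 1 ∧ g x < 1 ∧ 1 < x + g x)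
    -- G is an integral curve of the differential equation on (0,1):
    (hC1 : ContDiffOn ℝ 1 g (Set.Ioo (0 : ℝ) 1))
    (hode : ∀ x ∈ Set.Ioo (0 : ℝ) 1,
      deriv g x * (1 - x) * (x - g x + 1) + (1 - g x) * (g x - x + 1) = 0) :
    ∃ c : ℝ, c < 2 ∧ ∀ x ∈ Set.Icc (0 : ℝ) 1,
      x ^ 2 + (g x) ^ 2 - 1 + c * (x - 1) * (g x - 1) = 0 := by
  have hg : ∀ x ∈ Ioo (0 : ℝ) 1, HasDerivAt g (deriv g x) x := fun x hx =>
    ((hC1.contDiffAt (isOpen_Ioo.mem_nhds hx)).differentiableAt one_ne_zero).hasDerivAt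
  have hmid : (1 / 2 : ℝ) ∈ Ioo (0 : ℝ) 1 := by norm_num
  have hratio := isOpen_Ioo.eq_div_mul_of_wronskian_eq_zero isPreconnected_Ioo
    (u := fun x => x ^ 2 + g x ^ 2 - 1) (v := fun x => (x - 1) * (g x - 1))
    (fun x hx => by simpa using ((hasDerivAt_pow 2 x).add ((hg x hx).pow 2)).sub_const 1)
    (fun x hx => ((hasDerivAt_id' x).sub_const 1).mul ((hg x hx).sub_const 1))
    (fun x hx => by
      obtain ⟨hx1, hgx1, -⟩ := hW x hx
      exact mul_ne_zero (by linarith) (by linarith))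
    (fun x hx => by
      linear_combination conic_wronskian x (g x) (deriv g x) + (x + g x - 1) * hode x hx) hmid
  obtain ⟨hx1, hgx1, hxg⟩ := hW _ hmid
  refine ⟨_, neg_div_lt_two_of_mem_triangle hx1 hgx1 hxg, fun x hx => ?_⟩
  rcases hx.1.eq_or_lt with rfl | h0
  · rw [hg0]; ring
  rcases hx.2.eq_or_lt with rfl | h1
  · rw [hg1]; ring
  linear_combination hratio x ⟨h0, h1⟩

theorem stmt_8 (g : ℝ → ℝ)
    (hg0 : g 0 = 1) (hg1 : g 1 = 0)
    (hW : ∀ x ∈ Set.Ioo (0 : ℝ) 1, x < 1 ∧ g x < 1 ∧ 1 < x + g x)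
    -- G is an arc of the boundary of a strictly convex smooth disk supported by
    -- the half-planes x ≤ 1 and y ≤ 1:
    (K : Set (ℝ × ℝ)) (hKcomp : IsCompact K) (hKint : (interior K).Nonempty)
    (hKstrict : StrictConvex ℝ K) (hKsmooth : SmoothBody K)
    (hKx : K ⊆ {p : ℝ × ℝ | p.1 ≤ 1}) (hKy : K ⊆ {p : ℝ × ℝ | p.2 ≤ 1})
    (harc : ∀ x ∈ Set.Icc (0 : ℝ) 1, (x, g x) ∈ frontier K)
    -- G is an integral curve of the differential equation on (0,1):
    (hC1 : ContDiffOn ℝ 1 g (Set.Ioo (0 : ℝ) 1))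
    (hode : ∀ x ∈ Set.Ioo (0 : ℝ) 1,
      deriv g x * (1 - x) * (x - g x + 1) + (1 - g x) * (g x - x + 1) = 0) :
    ∃ c : ℝ, c < 2 ∧ ∀ x ∈ Set.Icc (0 : ℝ) 1,
      x ^ 2 + (g x) ^ 2 - 1 + c * (x - 1) * (g x - 1) = 0 :=
  stmt_8_general g hg0 hg1 hW hC1 hode
end

section
/- The only ellipse in the plane passing through the four points (1,0), (0,1), (−1,0), (0,−1) and contained in the square [−1,1]² is the unit circle x² + y² = 1. -/
theorem stmt_9 (a b c d e f : ℝ) (hdisc : b ^ 2 - 4 * a * c < 0)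
    (E : Set (ℝ × ℝ))
    (hE : E = {p : ℝ × ℝ |
      a * p.1 ^ 2 + b * p.1 * p.2 + c * p.2 ^ 2 + d * p.1 + e * p.2 + f = 0})
    (hnondeg : E.Infinite)
    (h1 : ((1 : ℝ), (0 : ℝ)) ∈ E) (h2 : ((0 : ℝ), (1 : ℝ)) ∈ E)
    (h3 : ((-1 : ℝ), (0 : ℝ)) ∈ E) (h4 : ((0 : ℝ), (-1 : ℝ)) ∈ E)
    (hsq : E ⊆ Set.Icc (-1 : ℝ) 1 ×ˢ Set.Icc (-1 : ℝ) 1) :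
    E = {p : ℝ × ℝ | p.1 ^ 2 + p.2 ^ 2 = 1} := by
  subst hE
  simp only [Set.mem_setOf_eq] at h1 h2 h3 h4
  norm_num at h1 h2 h3 h4
  have hd : d = 0 := by linarith
  have he : e = 0 := by linarith
  have hfa : f = -a := by linarith
  have hca : c = a := by linarith
  subst hd he hfa hca
  -- now everything is expressed in terms of c (a was replaced by c)
  have hba : b ^ 2 < 4 * c ^ 2 := by nlinarith
  have ha2 : 0 < c ^ 2 := by nlinarith [sq_nonneg b]
  have ha : c ≠ 0 := by intro h; rw [h] at ha2; norm_num at ha2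
  have hS2 : 0 < 4 * c ^ 2 - b ^ 2 := by linarith
  have hb : b = 0 := by
    by_contra hb
    set S := Real.sqrt (4 * c ^ 2 - b ^ 2) with hSdef
    have hSpos : 0 < S := Real.sqrt_pos.mpr hS2
    have hSsq : S ^ 2 = 4 * c ^ 2 - b ^ 2 := Real.sq_sqrt hS2.le
    have hSlt : S < 2 * |c| := by
      have h2a : (0:ℝ) ≤ 2 * |c| := by positivity
      have hb2 : 0 < b ^ 2 := by positivity
      nlinarith [sq_abs c, hSpos.le]
    set x : ℝ := 2 * |c| / S with hx
    have hx1 : 1 < x := by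
      rw [hx, lt_div_iff₀ hSpos]
      linarith
    set y : ℝ := -b * x / (2 * c) with hy
    have hxsq : x ^ 2 = 4 * c ^ 2 / (4 * c ^ 2 - b ^ 2) := by
      rw [hx, div_pow, hSsq, mul_pow, sq_abs]
      norm_num
    have hmem : (x, y) ∈ {p : ℝ × ℝ |
        c * p.1 ^ 2 + b * p.1 * p.2 + c * p.2 ^ 2 + 0 * p.1 + 0 * p.2 + -c = 0} := by
      simp only [Set.mem_setOf_eq]
      have key : c * x ^ 2 + b * x * y + c * y ^ 2 + 0 * x + 0 * y + -c
          = x ^ 2 * (4 * c ^ 2 - b ^ 2) / (4 * c) - c := by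
        rw [hy]; field_simp; ring
      rw [key, hxsq]
      field_simp
      ring
    have hmem2 := hsq hmem
    simp only [Set.mem_prod, Set.mem_Icc] at hmem2
    linarith [hmem2.1.2]
  subst hb
  ext p
  simp only [Set.mem_setOf_eq]
  constructor
  · intro h
    have hz : c * (p.1 ^ 2 + p.2 ^ 2 - 1) = 0 := by linarith
    rcases mul_eq_zero.mp hz with h' | h'
    · exact absurd h' ha
    · linarith
  · intro h
    linear_combination c * h
end

section
/- Let M be a centrally symmetric convex body in ℝ² with center o. Then there exists a parallelogram S circumscribed about M such that the midpoint of each side of S belongs to M. In particular, a parallelogram of smallest area circumscribed about M has this property. -/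
/-!
Inscribe in `M` a pair `u, v` maximising `|det2 u v|`: maximality gives
`|det2 p v|, |det2 u p| ≤ |det2 u v|` for every `p ∈ M`, which says exactly that
`M ⊆ Parall u v`, and `±u, ±v ∈ M` are the midpoints of its sides.

For a circumscribed parallelogram of least area, suppose the midpoint `v` of a side is not in `M`.
The contact set of `M` with that side is a segment avoiding `v`, hence on one side of `v`.
Shearing `u` slightly along `±v` keeps the area but detaches that side from `M`, and by
compactness the parallelogram can then be shrunk in the `v` direction, contradicting minimality.
-/

/-- The closed parallelogram centered at the origin with "half-side" vectors `u`, `v`. -/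
def Parall (u v : ℝ × ℝ) : Set (ℝ × ℝ) :=
  {p | ∃ s t : ℝ, |s| ≤ 1 ∧ |t| ≤ 1 ∧ p = s • u + t • v}

/-- `Parall u v` has area `4 * |det2 u v|`. -/
def det2 (u v : ℝ × ℝ) : ℝ := u.1 * v.2 - u.2 * v.1

@[fun_prop]
lemma Continuous.det2 {X : Type*} [TopologicalSpace X] {f g : X → ℝ × ℝ} (hf : Continuous f)
    (hg : Continuous g) : Continuous fun x ↦ det2 (f x) (g x) := by
  unfold _root_.det2; fun_prop

lemma det2_swap (u v : ℝ × ℝ) : det2 v u = -det2 u v := by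
  simp only [det2]; ring

lemma det2_self (u : ℝ × ℝ) : det2 u u = 0 := by
  simp only [det2]; ring

lemma det2_neg_left (u v : ℝ × ℝ) : det2 (-u) v = -det2 u v := by
  simp only [det2, Prod.fst_neg, Prod.snd_neg]; ring

lemma det2_neg_right (u v : ℝ × ℝ) : det2 u (-v) = -det2 u v := by
  simp only [det2, Prod.fst_neg, Prod.snd_neg]; ring

lemma det2_smul_right (u v : ℝ × ℝ) (s : ℝ) : det2 u (s • v) = s * det2 u v := by
  simp only [det2, Prod.smul_fst, Prod.smul_snd, smul_eq_mul]; ring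

lemma det2_add_smul_left (u w p : ℝ × ℝ) (s : ℝ) :
    det2 (u + s • w) p = det2 u p + s * det2 w p := by
  simp only [det2, Prod.fst_add, Prod.snd_add, Prod.smul_fst, Prod.smul_snd, smul_eq_mul]; ring

lemma isLinearMap_det2 (u : ℝ × ℝ) : IsLinearMap ℝ (det2 u) where
  map_add p q := by simp only [det2, Prod.fst_add, Prod.snd_add]; ring
  map_smul c p := by simp only [det2_smul_right, smul_eq_mul]

/-- Cramer's rule. -/
lemma det2_smul_eq (u v p : ℝ × ℝ) : det2 u v • p = det2 p v • u + det2 u p • v := by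
  ext <;> simp only [det2, Prod.smul_fst, Prod.smul_snd, Prod.fst_add, Prod.snd_add,
    smul_eq_mul] <;> ring

lemma linearIndependent_iff_det2_ne_zero {u v : ℝ × ℝ} :
    LinearIndependent ℝ ![u, v] ↔ det2 u v ≠ 0 := by
  rw [LinearIndependent.pair_iff]
  constructor
  · intro h hD
    have hv : ∀ p, det2 p v = 0 := fun p ↦
      (h _ _ (by rw [← det2_smul_eq, hD, zero_smul])).1
    have hv0 : v = 0 := by
      ext
      · simpa [det2] using hv (0, 1)
      · simpa [det2] using hv (1, 0)
    simpa [hv0] using h 0 1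
  · intro hD s t hst
    have hs : det2 (s • u + t • v) v = s * det2 u v := by
      simp only [det2, Prod.fst_add, Prod.snd_add, Prod.smul_fst, Prod.smul_snd, smul_eq_mul]; ring
    have ht : det2 u (s • u + t • v) = t * det2 u v := by
      simp only [det2, Prod.fst_add, Prod.snd_add, Prod.smul_fst, Prod.smul_snd, smul_eq_mul]; ring
    rw [hst] at hs ht
    simp only [det2, Prod.fst_zero, Prod.snd_zero, mul_zero, zero_mul, sub_zero] at hs ht
    exact ⟨(mul_eq_zero.1 hs.symm).resolve_right hD, (mul_eq_zero.1 ht.symm).resolve_right hD⟩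

lemma mem_parall_iff {u v : ℝ × ℝ} (hD : det2 u v ≠ 0) (p : ℝ × ℝ) :
    p ∈ Parall u v ↔ |det2 p v| ≤ |det2 u v| ∧ |det2 u p| ≤ |det2 u v| := by
  constructor
  · rintro ⟨s, t, hs, ht, rfl⟩
    have h1 : det2 (s • u + t • v) v = s * det2 u v := by
      simp only [det2, Prod.fst_add, Prod.snd_add, Prod.smul_fst, Prod.smul_snd, smul_eq_mul]; ring
    have h2 : det2 u (s • u + t • v) = t * det2 u v := by
      simp only [det2, Prod.fst_add, Prod.snd_add, Prod.smul_fst, Prod.smul_snd, smul_eq_mul]; ring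
    rw [h1, h2, abs_mul, abs_mul]
    exact ⟨mul_le_of_le_one_left (abs_nonneg _) hs, mul_le_of_le_one_left (abs_nonneg _) ht⟩
  · rintro ⟨h1, h2⟩
    refine ⟨det2 p v / det2 u v, det2 u p / det2 u v, ?_, ?_, ?_⟩
    · rw [abs_div]; exact div_le_one_of_le₀ h1 (abs_nonneg _)
    · rw [abs_div]; exact div_le_one_of_le₀ h2 (abs_nonneg _)
    · rw [div_eq_inv_mul, div_eq_inv_mul, mul_smul, mul_smul, ← smul_add, ← det2_smul_eq,
        inv_smul_smul₀ hD]

lemma parall_comm (u v : ℝ × ℝ) : Parall u v = Parall v u := by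
  ext p
  constructor <;> rintro ⟨s, t, hs, ht, rfl⟩ <;> exact ⟨t, s, ht, hs, add_comm _ _⟩

lemma parall_neg_left (u v : ℝ × ℝ) : Parall (-u) v = Parall u v := by
  ext p
  constructor <;> rintro ⟨s, t, hs, ht, rfl⟩ <;> exact ⟨-s, t, by rwa [abs_neg], ht, by simp⟩

lemma IsCompact.exists_lt_forall_le {X α : Type*} [TopologicalSpace X] [LinearOrder α]
    [TopologicalSpace α] [ClosedIciTopology α] [NoMinOrder α] {K : Set X} (hK : IsCompact K)
    {f : X → α} (hf : ContinuousOn f K) {D : α} (hfD : ∀ p ∈ K, f p < D) :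
    ∃ m < D, ∀ p ∈ K, f p ≤ m := by
  rcases K.eq_empty_or_nonempty with rfl | hne
  · obtain ⟨m, hm⟩ := exists_lt D
    exact ⟨m, hm, by simp⟩
  · obtain ⟨p, hp, hmax⟩ := hK.exists_isMaxOn hne hf
    exact ⟨f p, hfD p hp, isMaxOn_iff.1 hmax⟩

lemma IsCompact.exists_pos_forall_sub_mul_lt {X : Type*} [TopologicalSpace X] {K : Set X}
    (hK : IsCompact K) {f g : X → ℝ} (hf : Continuous f) (hg : Continuous g) {D : ℝ}
    (hfD : ∀ p ∈ K, f p ≤ D) (hgpos : ∀ p ∈ K, f p = D → 0 < g p) :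
    ∃ s > 0, ∀ p ∈ K, f p - s * g p < D := by
  have hF : IsCompact {p ∈ K | g p ≤ 0} := hK.inter_right (isClosed_le hg continuous_const)
  obtain ⟨m, hmD, hm⟩ := hF.exists_lt_forall_le hf.continuousOn fun p hp ↦
    (hfD p hp.1).lt_of_ne fun h ↦ (hgpos p hp.1 h).not_ge hp.2
  obtain ⟨C, hC⟩ := hK.exists_bound_of_continuousOn hg.continuousOn
  have hs : 0 < (D - m) / (|C| + 1) := by have := sub_pos.2 hmD; positivity
  refine ⟨_, hs, fun p hp ↦ ?_⟩
  rcases le_or_gt (g p) 0 with hgp | hgp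
  · have hgC : -g p ≤ |C| := (neg_le_abs _).trans ((hC p hp).trans (le_abs_self C))
    calc f p - (D - m) / (|C| + 1) * g p ≤ m + (D - m) / (|C| + 1) * |C| := by
          nlinarith [hm p ⟨hp, hgp⟩]
      _ < m + (D - m) := by
          gcongr
          rw [div_mul_eq_mul_div, div_lt_iff₀ (by positivity)]
          nlinarith [sub_pos.2 hmD]
      _ = D := by ring
  · nlinarith [hfD p hp]

lemma exists_parall_abs_det2_lt_of_shear {M : Set (ℝ × ℝ)} (hMcomp : IsCompact M)
    (hMneg : ∀ p ∈ M, -p ∈ M) {u v w : ℝ × ℝ} (hD : 0 < det2 u v) (hsub : M ⊆ Parall u v)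
    (hwv : det2 w v = 0) (hw : ∀ p ∈ M, det2 u p = det2 u v → 0 < det2 p w) :
    ∃ u' v', det2 u' v' ≠ 0 ∧ M ⊆ Parall u' v' ∧ |det2 u' v'| < det2 u v := by
  set D := det2 u v
  have hbound : ∀ p ∈ M, |det2 p v| ≤ D ∧ |det2 u p| ≤ D := fun p hp ↦ by
    have h := (mem_parall_iff hD.ne' p).1 (hsub hp)
    rwa [abs_of_pos hD] at h
  obtain ⟨s, -, hs⟩ := hMcomp.exists_pos_forall_sub_mul_lt (f := det2 u) (g := (det2 · w))
    (by fun_prop) (by fun_prop) (fun p hp ↦ (abs_le.1 (hbound p hp).2).2) hw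
  have hshear : ∀ p ∈ M, |det2 (u + s • w) p| < D := by
    intro p hp
    have h₁ := hs p hp
    have h₂ := hs (-p) (hMneg p hp)
    rw [det2_neg_right, det2_neg_left] at h₂
    rw [det2_add_smul_left, det2_swap p w, abs_lt]
    constructor <;> linarith
  obtain ⟨β, hβD, hβ⟩ := hMcomp.exists_lt_forall_le (by fun_prop : Continuous
    fun p ↦ |det2 (u + s • w) p|).continuousOn hshear
  set β' := max β (D / 2)
  have hβ'D : β' < D := max_lt hβD (by linarith)
  have hβ' : 0 < β' := lt_max_of_lt_right (by positivity)
  have hdet : det2 (u + s • w) ((β' / D) • v) = β' := by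
    rw [det2_smul_right, det2_add_smul_left, hwv, mul_zero, add_zero, div_mul_cancel₀ _ hD.ne']
  have hdet0 : det2 (u + s • w) ((β' / D) • v) ≠ 0 := by rw [hdet]; exact hβ'.ne'
  refine ⟨u + s • w, (β' / D) • v, hdet0, fun p hp ↦ ?_, by rwa [hdet, abs_of_pos hβ']⟩
  rw [mem_parall_iff hdet0, hdet, abs_of_pos hβ', det2_smul_right, abs_mul,
    abs_of_pos (by positivity)]
  constructor
  · calc β' / D * |det2 p v| ≤ β' / D * D := by gcongr; exact (hbound p hp).1
      _ = β' := div_mul_cancel₀ _ hD.ne'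
  · exact (hβ p hp).trans (le_max_left _ _)

lemma det2_pos_on_contact_or_of_not_mem {M : Set (ℝ × ℝ)} (hMconv : Convex ℝ M)
    {u v : ℝ × ℝ} (hD : det2 u v ≠ 0) (hv : v ∉ M) :
    (∀ p ∈ M, det2 u p = det2 u v → 0 < det2 p v) ∨
      (∀ p ∈ M, det2 u p = det2 u v → 0 < det2 p (-v)) := by
  have hC : Convex ℝ {p ∈ M | det2 u p = det2 u v} :=
    hMconv.inter (convex_hyperplane (isLinearMap_det2 u) _)
  have hne : ∀ p ∈ {p ∈ M | det2 u p = det2 u v}, det2 p v ≠ 0 := by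
    rintro p ⟨hpM, hp⟩ h0
    have h := det2_smul_eq u v p
    rw [hp, h0, zero_smul, zero_add] at h
    exact hv (smul_right_injective _ hD h ▸ hpM)
  by_contra! h
  obtain ⟨⟨p, hpM, hp, hpv⟩, ⟨q, hqM, hq, hqv⟩⟩ := h
  rw [det2_neg_right, neg_nonpos] at hqv
  obtain ⟨x, hxC, hx⟩ := hC.isPreconnected.intermediate_value ⟨hpM, hp⟩ ⟨hqM, hq⟩
    (by fun_prop : Continuous (det2 · v)).continuousOn ⟨hpv, hqv⟩
  exact hne x hxC hx

lemma right_mem_of_forall_abs_det2_le {M : Set (ℝ × ℝ)} (hMcomp : IsCompact M)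
    (hMconv : Convex ℝ M) (hMneg : ∀ p ∈ M, -p ∈ M) {u v : ℝ × ℝ} (hD : det2 u v ≠ 0)
    (hsub : M ⊆ Parall u v)
    (hmin : ∀ u' v', det2 u' v' ≠ 0 → M ⊆ Parall u' v' → |det2 u v| ≤ |det2 u' v'|) :
    v ∈ M := by
  wlog hpos : 0 < det2 u v generalizing u
  · refine this (u := -u) (by rwa [det2_neg_left, neg_ne_zero]) (by rwa [parall_neg_left])
      (by simpa only [det2_neg_left, abs_neg] using hmin) ?_
    rw [det2_neg_left, neg_pos]
    exact (not_lt.1 hpos).lt_of_ne hD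
  by_contra hv
  obtain ⟨u', v', hD', hsub', hlt⟩ :
      ∃ u' v', det2 u' v' ≠ 0 ∧ M ⊆ Parall u' v' ∧ |det2 u' v'| < det2 u v := by
    rcases det2_pos_on_contact_or_of_not_mem hMconv hD hv with h | h
    · exact exists_parall_abs_det2_lt_of_shear hMcomp hMneg hpos hsub (det2_self v) h
    · exact exists_parall_abs_det2_lt_of_shear hMcomp hMneg hpos hsub
        (by rw [det2_neg_left, det2_self, neg_zero]) h
  have := hmin u' v' hD' hsub'
  rw [abs_of_pos hpos] at this
  linarith

lemma zero_mem_interior_of_neg_mem {E : Type*} [TopologicalSpace E] [AddCommGroup E]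
    [IsTopologicalAddGroup E] [Module ℝ E] [ContinuousConstSMul ℝ E] {M : Set E}
    (hMconv : Convex ℝ M) (hMneg : ∀ p ∈ M, -p ∈ M) (hMint : (interior M).Nonempty) :
    (0 : E) ∈ interior M := by
  obtain ⟨x, hx⟩ := hMint
  have hx' : -x ∈ interior M :=
    interior_maximal (fun y hy ↦ by simpa using hMneg _ (interior_subset hy))
      isOpen_interior.neg (by simpa using hx)
  simpa using hMconv.interior hx hx' (by norm_num : (0 : ℝ) ≤ 1 / 2)
    (by norm_num : (0 : ℝ) ≤ 1 / 2) (by norm_num)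

lemma exists_det2_ne_zero_of_zero_mem_interior {M : Set (ℝ × ℝ)}
    (h : (0 : ℝ × ℝ) ∈ interior M) : ∃ p ∈ M, ∃ q ∈ M, det2 p q ≠ 0 := by
  obtain ⟨ε, hε, hball⟩ := Metric.mem_nhds_iff.1 (mem_interior_iff_mem_nhds.1 h)
  refine ⟨(ε / 2, 0), hball ?_, (0, ε / 2), hball ?_, ?_⟩
  · simp [Prod.norm_def, abs_of_pos hε, hε]
  · simp [Prod.norm_def, abs_of_pos hε, hε]
  · simp [det2, hε.ne']

lemma exists_mem_det2_ne_zero_subset_parall {M : Set (ℝ × ℝ)} (hMcomp : IsCompact M)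
    (h : ∃ p ∈ M, ∃ q ∈ M, det2 p q ≠ 0) :
    ∃ u ∈ M, ∃ v ∈ M, det2 u v ≠ 0 ∧ M ⊆ Parall u v := by
  obtain ⟨p, hp, q, hq, hpq⟩ := h
  obtain ⟨⟨u, v⟩, ⟨hu, hv⟩, hmax⟩ := (hMcomp.prod hMcomp).exists_isMaxOn ⟨(p, q), hp, hq⟩
    (by fun_prop : Continuous fun w : (ℝ × ℝ) × (ℝ × ℝ) ↦ |det2 w.1 w.2|).continuousOn
  rw [isMaxOn_iff] at hmax
  have hD : det2 u v ≠ 0 := abs_pos.1 ((abs_pos.2 hpq).trans_le (hmax (p, q) ⟨hp, hq⟩))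
  exact ⟨u, hu, v, hv, hD, fun x hx ↦
    (mem_parall_iff hD x).2 ⟨hmax (x, v) ⟨hx, hv⟩, hmax (u, x) ⟨hu, hx⟩⟩⟩

theorem stmt_14 (M : Set (ℝ × ℝ))
    (hMcomp : IsCompact M) (hMconv : Convex ℝ M) (hMint : (interior M).Nonempty)
    (hMsymm : M = -M) :
    -- there exists a circumscribed parallelogram whose side-midpoints lie in M
    (∃ u v : ℝ × ℝ, LinearIndependent ℝ ![u, v] ∧ M ⊆ Parall u v ∧
      u ∈ M ∧ -u ∈ M ∧ v ∈ M ∧ -v ∈ M) ∧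
    -- in particular, any smallest-area parallelogram containing M has this property
    (∀ u v : ℝ × ℝ, LinearIndependent ℝ ![u, v] → M ⊆ Parall u v →
      (∀ u' v' : ℝ × ℝ, LinearIndependent ℝ ![u', v'] → M ⊆ Parall u' v' →
        |u.1 * v.2 - u.2 * v.1| ≤ |u'.1 * v'.2 - u'.2 * v'.1|) →
      u ∈ M ∧ -u ∈ M ∧ v ∈ M ∧ -v ∈ M) := by
  have hMneg : ∀ p ∈ M, -p ∈ M := fun p hp ↦ by rwa [hMsymm] at hp
  refine ⟨?_, fun u v hli hsub hmin ↦ ?_⟩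
  · obtain ⟨u, hu, v, hv, hD, hsub⟩ := exists_mem_det2_ne_zero_subset_parall hMcomp
      (exists_det2_ne_zero_of_zero_mem_interior (zero_mem_interior_of_neg_mem hMconv hMneg hMint))
    exact ⟨u, v, linearIndependent_iff_det2_ne_zero.2 hD, hsub, hu, hMneg u hu, hv, hMneg v hv⟩
  · have hD := linearIndependent_iff_det2_ne_zero.1 hli
    have hmin' : ∀ u' v', det2 u' v' ≠ 0 → M ⊆ Parall u' v' → |det2 u v| ≤ |det2 u' v'| :=
      fun u' v' h h' ↦ hmin u' v' (linearIndependent_iff_det2_ne_zero.2 h) h'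
    have hv := right_mem_of_forall_abs_det2_le hMcomp hMconv hMneg hD hsub hmin'
    have hu := right_mem_of_forall_abs_det2_le hMcomp hMconv hMneg (u := v) (v := u)
      (by rwa [det2_swap, neg_ne_zero]) (by rwa [parall_comm])
      (by simpa only [det2_swap v u, abs_neg] using hmin')
    exact ⟨hu, hMneg u hu, hv, hMneg v hv⟩
end

section
/- Let ‖·‖ be a norm on ℝ² with unit ball M, and let two closed rays emanate from a common point a. A point p in the convex hull of the two rays is equidistant (in the norm) from the two rays if and only if there exists λ ≥ 0 such that the disk p + λM touches both rays (i.e., λ equals the distance from p to each ray). Consequently, the set of such equidistant points (the Glogovskij bisector) is a closed ray emanating from a. -/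
/-- `nrm` is a norm on `ℝ²`. -/
def IsNorm (nrm : ℝ × ℝ → ℝ) : Prop :=
  (∀ x : ℝ × ℝ, nrm x = 0 ↔ x = 0) ∧
  (∀ (r : ℝ) (x : ℝ × ℝ), nrm (r • x) = |r| * nrm x) ∧
  (∀ x y : ℝ × ℝ, nrm (x + y) ≤ nrm x + nrm y)

/-- Distance from a point to a set in the norm `nrm`. -/
noncomputable def nrmDist (nrm : ℝ × ℝ → ℝ) (p : ℝ × ℝ) (S : Set (ℝ × ℝ)) : ℝ :=
  sInf ((fun q => nrm (p - q)) '' S)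

/-- The closed ray from `a` in direction `b`. -/
def Ray (a b : ℝ × ℝ) : Set (ℝ × ℝ) := {q | ∃ t : ℝ, 0 ≤ t ∧ q = a + t • b}

set_option linter.unnecessarySeqFocus false

open Pointwise

section aux
variable {nrm : ℝ × ℝ → ℝ}

lemma nrm_zero (h : IsNorm nrm) : nrm 0 = 0 := (h.1 0).2 rfl

lemma nrm_neg (h : IsNorm nrm) (x : ℝ × ℝ) : nrm (-x) = nrm x := by
  have := h.2.1 (-1) x
  simpa using this

lemma nrm_nonneg (h : IsNorm nrm) (x : ℝ × ℝ) : 0 ≤ nrm x := by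
  have h1 := h.2.2 x (-x)
  rw [add_neg_cancel, nrm_zero h, nrm_neg h] at h1
  linarith

lemma nrm_sub_rev (h : IsNorm nrm) (x y : ℝ × ℝ) : nrm (x - y) = nrm (y - x) := by
  rw [← nrm_neg h (x - y), neg_sub]

lemma ray_nonempty (a b : ℝ × ℝ) : (Ray a b).Nonempty :=
  ⟨a, 0, le_refl _, by simp⟩

lemma self_mem_ray (a b : ℝ × ℝ) : a ∈ Ray a b := ⟨0, le_refl _, by simp⟩

lemma tip_mem_ray (a b : ℝ × ℝ) : a + b ∈ Ray a b := ⟨1, zero_le_one, by simp⟩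

lemma ray_convex (a b : ℝ × ℝ) : Convex ℝ (Ray a b) := by
  rintro x ⟨s, hs, rfl⟩ y ⟨t, ht, rfl⟩ u v hu hv huv
  refine ⟨u * s + v * t, by positivity, ?_⟩
  match_scalars <;> ring_nf <;> nlinarith [huv]

lemma nd_bdd (p : ℝ × ℝ) (S : Set (ℝ × ℝ)) (h : IsNorm nrm) :
    BddBelow ((fun q => nrm (p - q)) '' S) :=
  ⟨0, by rintro r ⟨q, _, rfl⟩; exact nrm_nonneg h _⟩

lemma nd_nonneg (h : IsNorm nrm) (p : ℝ × ℝ) (S : Set (ℝ × ℝ)) : 0 ≤ nrmDist nrm p S :=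
  Real.sInf_nonneg (by rintro r ⟨q, _, rfl⟩; exact nrm_nonneg h _)

lemma nd_le (h : IsNorm nrm) {p q : ℝ × ℝ} {S : Set (ℝ × ℝ)} (hq : q ∈ S) :
    nrmDist nrm p S ≤ nrm (p - q) :=
  csInf_le (nd_bdd p S h) ⟨q, hq, rfl⟩

lemma le_nd {p : ℝ × ℝ} {S : Set (ℝ × ℝ)} {m : ℝ} (hS : S.Nonempty)
    (hm : ∀ q ∈ S, m ≤ nrm (p - q)) : m ≤ nrmDist nrm p S :=
  le_csInf (hS.image _) (by rintro r ⟨q, hq, rfl⟩; exact hm q hq)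

lemma nd_mem_zero (h : IsNorm nrm) {q : ℝ × ℝ} {S : Set (ℝ × ℝ)} (hq : q ∈ S) :
    nrmDist nrm q S = 0 := by
  have h1 := nd_le h (p := q) hq
  simp only [sub_self, nrm_zero h] at h1
  exact le_antisymm h1 (nd_nonneg h q S)

lemma nrm_le_std (h : IsNorm nrm) :
    ∀ x : ℝ × ℝ, nrm x ≤ (nrm (1, 0) + nrm (0, 1)) * ‖x‖ := by
  intro x
  have hx : x = x.1 • ((1 : ℝ), (0 : ℝ)) + x.2 • ((0 : ℝ), (1 : ℝ)) := by
    ext <;> simp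
  calc nrm x ≤ nrm (x.1 • ((1:ℝ), (0:ℝ))) + nrm (x.2 • ((0:ℝ), (1:ℝ))) := by
        conv_lhs => rw [hx]
        exact h.2.2 _ _
    _ = |x.1| * nrm (1, 0) + |x.2| * nrm (0, 1) := by rw [h.2.1, h.2.1]
    _ ≤ (nrm (1, 0) + nrm (0, 1)) * ‖x‖ := by
        have h1 : |x.1| ≤ ‖x‖ := by simpa using norm_fst_le x
        have h2 : |x.2| ≤ ‖x‖ := by simpa using norm_snd_le x
        have n1 := nrm_nonneg h ((1:ℝ), (0:ℝ))
        have n2 := nrm_nonneg h ((0:ℝ), (1:ℝ))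
        nlinarith

lemma nrm_abs_sub (h : IsNorm nrm) (x y : ℝ × ℝ) : |nrm x - nrm y| ≤ nrm (x - y) := by
  have h1 : nrm x - nrm y ≤ nrm (x - y) := by
    have := h.2.2 (x - y) y; simp at this; linarith
  have h2 : nrm y - nrm x ≤ nrm (x - y) := by
    have := h.2.2 (y - x) x; simp at this
    rw [nrm_sub_rev h]; linarith
  exact abs_le.2 ⟨by linarith, h1⟩

lemma nrm_continuous (h : IsNorm nrm) : Continuous nrm := by
  set C := nrm (1, 0) + nrm (0, 1) with hC
  have hC0 : 0 ≤ C := by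
    have := nrm_nonneg h ((1:ℝ),(0:ℝ)); have := nrm_nonneg h ((0:ℝ),(1:ℝ)); linarith
  have : LipschitzWith (Real.toNNReal C) nrm := by
    apply LipschitzWith.of_dist_le_mul
    intro x y
    rw [Real.dist_eq, dist_eq_norm]
    calc |nrm x - nrm y| ≤ nrm (x - y) := nrm_abs_sub h x y
      _ ≤ C * ‖x - y‖ := nrm_le_std h _
      _ ≤ Real.toNNReal C * ‖x - y‖ := by
          gcongr; exact (Real.coe_toNNReal C hC0).symm.le
  exact this.continuous

lemma nrm_lower (h : IsNorm nrm) : ∃ ε > 0, ∀ x : ℝ × ℝ, ε * ‖x‖ ≤ nrm x := by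
  have hco : IsCompact (Metric.sphere (0 : ℝ × ℝ) 1) := isCompact_sphere _ _
  have hne : (Metric.sphere (0 : ℝ × ℝ) 1).Nonempty :=
    ⟨((1:ℝ), (0:ℝ)), by simp [Prod.norm_def]⟩
  obtain ⟨x₀, hx₀, hmin⟩ := hco.exists_isMinOn hne (nrm_continuous h).continuousOn
  have hx₀1 : ‖x₀‖ = 1 := by simpa using hx₀
  have hε : 0 < nrm x₀ := by
    rcases lt_or_eq_of_le (nrm_nonneg h x₀) with h' | h'
    · exact h'
    · exfalso
      have : x₀ = 0 := (h.1 x₀).1 h'.symm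
      rw [this] at hx₀1; simp at hx₀1
  refine ⟨nrm x₀, hε, fun x => ?_⟩
  rcases eq_or_ne x 0 with rfl | hx
  · simp [(h.1 0).2 rfl]
  · have hnx : (0:ℝ) < ‖x‖ := norm_pos_iff.2 hx
    have hu : ‖x‖⁻¹ • x ∈ Metric.sphere (0 : ℝ × ℝ) 1 := by
      simp [norm_smul, abs_of_pos (inv_pos.2 hnx), inv_mul_cancel₀ hnx.ne']
    have hmin' : nrm x₀ ≤ nrm (‖x‖⁻¹ • x) := hmin hu
    have hs : nrm (‖x‖⁻¹ • x) = ‖x‖⁻¹ * nrm x := by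
      rw [h.2.1, abs_of_pos (inv_pos.2 hnx)]
    rw [hs] at hmin'
    calc nrm x₀ * ‖x‖ ≤ (‖x‖⁻¹ * nrm x) * ‖x‖ := by nlinarith
      _ = nrm x := by field_simp

/-- coordinate lower bound: the `v`-coefficient is controlled by the norm -/
lemma coord_lb (h : IsNorm nrm) {v w : ℝ × ℝ} (hD : v.1 * w.2 - v.2 * w.1 ≠ 0) :
    ∃ κ > 0, ∀ s t : ℝ, κ * |s| ≤ nrm (s • v + t • w) := by
  obtain ⟨ε, hε, hεle⟩ := nrm_lower h
  have hw : w ≠ 0 := by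
    rintro rfl; simp at hD
  have hW : 0 < |w.1| + |w.2| := by
    rcases eq_or_ne w.1 0 with h1 | h1
    · have h2 : w.2 ≠ 0 := fun h2 => hw (Prod.ext h1 h2)
      have := abs_pos.2 h2
      have := abs_nonneg w.1
      linarith
    · have := abs_pos.2 h1
      have := abs_nonneg w.2
      linarith
  refine ⟨ε * |v.1 * w.2 - v.2 * w.1| / (|w.1| + |w.2|), by positivity, fun s t => ?_⟩
  set z := s • v + t • w with hz
  have hz1 : z.1 = s * v.1 + t * w.1 := rfl
  have hz2 : z.2 = s * v.2 + t * w.2 := rfl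
  have key : |s| * |v.1 * w.2 - v.2 * w.1| ≤ ‖z‖ * (|w.1| + |w.2|) := by
    have e : s * (v.1 * w.2 - v.2 * w.1) = z.1 * w.2 - z.2 * w.1 := by
      rw [hz1, hz2]; ring
    have h1 : |z.1| ≤ ‖z‖ := by simpa using norm_fst_le z
    have h2 : |z.2| ≤ ‖z‖ := by simpa using norm_snd_le z
    calc |s| * |v.1 * w.2 - v.2 * w.1| = |s * (v.1 * w.2 - v.2 * w.1)| := (abs_mul _ _).symm
      _ = |z.1 * w.2 - z.2 * w.1| := by rw [e]
      _ ≤ |z.1 * w.2| + |z.2 * w.1| := by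
          rw [sub_eq_add_neg]
          refine (abs_add_le _ _).trans ?_
          rw [abs_neg]
      _ = |z.1| * |w.2| + |z.2| * |w.1| := by rw [abs_mul, abs_mul]
      _ ≤ ‖z‖ * (|w.1| + |w.2|) := by
          nlinarith [h1, h2, abs_nonneg z.1, abs_nonneg z.2, abs_nonneg w.1, abs_nonneg w.2]
  have h2 : ε * ‖z‖ ≤ nrm z := hεle z
  rw [div_mul_eq_mul_div, div_le_iff₀ hW]
  nlinarith [abs_nonneg s, abs_nonneg (v.1 * w.2 - v.2 * w.1), norm_nonneg z]

/-- convexity inequality for the distance function -/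
lemma nd_convex (h : IsNorm nrm) {S : Set (ℝ × ℝ)} (hS : S.Nonempty) (hconv : Convex ℝ S)
    {θ : ℝ} (hθ0 : 0 ≤ θ) (hθ1 : θ ≤ 1) (x y : ℝ × ℝ) :
    nrmDist nrm (θ • x + (1 - θ) • y) S ≤ θ * nrmDist nrm x S + (1 - θ) * nrmDist nrm y S := by
  refine le_of_forall_pos_le_add fun ε hε => ?_
  obtain ⟨r1, ⟨q1, hq1, rfl⟩, hr1⟩ :=
    Real.lt_sInf_add_pos (hS.image (fun q => nrm (x - q))) (half_pos hε)
  obtain ⟨r2, ⟨q2, hq2, rfl⟩, hr2⟩ :=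
    Real.lt_sInf_add_pos (hS.image (fun q => nrm (y - q))) (half_pos hε)
  have hqS : θ • q1 + (1 - θ) • q2 ∈ S := hconv hq1 hq2 hθ0 (by linarith) (by ring)
  have key : nrmDist nrm (θ • x + (1 - θ) • y) S ≤ θ * nrm (x - q1) + (1 - θ) * nrm (y - q2) := by
    calc nrmDist nrm (θ • x + (1 - θ) • y) S
        ≤ nrm ((θ • x + (1 - θ) • y) - (θ • q1 + (1 - θ) • q2)) := nd_le h hqS
      _ = nrm (θ • (x - q1) + (1 - θ) • (y - q2)) := by congr 1; module
      _ ≤ nrm (θ • (x - q1)) + nrm ((1 - θ) • (y - q2)) := h.2.2 _ _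
      _ = θ * nrm (x - q1) + (1 - θ) * nrm (y - q2) := by
          rw [h.2.1, h.2.1, abs_of_nonneg hθ0, abs_of_nonneg (by linarith : (0:ℝ) ≤ 1 - θ)]
  have e1 : sInf ((fun q => nrm (x - q)) '' S) = nrmDist nrm x S := rfl
  have e2 : sInf ((fun q => nrm (y - q)) '' S) = nrmDist nrm y S := rfl
  rw [e1] at hr1; rw [e2] at hr2
  nlinarith [key]

/-- homogeneity of the distance along scaling from the vertex -/
lemma nd_homog (h : IsNorm nrm) (a v w : ℝ × ℝ) {t : ℝ} (ht : 0 ≤ t) :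
    nrmDist nrm (a + t • v) (Ray a w) = t * nrmDist nrm (a + v) (Ray a w) := by
  rcases eq_or_lt_of_le ht with rfl | ht
  · simpa using nd_mem_zero h (self_mem_ray a w)
  · have himg : (fun q => nrm (a + t • v - q)) '' Ray a w
        = t • ((fun q => nrm (a + v - q)) '' Ray a w) := by
      ext r
      constructor
      · rintro ⟨q, ⟨u, hu, rfl⟩, rfl⟩
        refine ⟨nrm (a + v - (a + (u / t) • w)),
          ⟨a + (u / t) • w, ⟨u / t, by positivity, rfl⟩, rfl⟩, ?_⟩
        have : a + t • v - (a + u • w) = t • (a + v - (a + (u / t) • w)) := by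
          match_scalars <;> field_simp <;> ring
        simp only [smul_eq_mul, this, h.2.1, abs_of_pos ht]
      · rintro ⟨r', ⟨q, ⟨u, hu, rfl⟩, rfl⟩, rfl⟩
        refine ⟨a + (t * u) • w, ⟨t * u, by positivity, rfl⟩, ?_⟩
        have : a + t • v - (a + (t * u) • w) = t • (a + v - (a + u • w)) := by
          module
        simp only [smul_eq_mul, this, h.2.1, abs_of_pos ht]
    show sInf _ = _
    rw [himg, Real.sInf_smul_of_nonneg ht.le]
    rfl

/-- the Lipschitz property of the distance function -/
lemma nd_lip (h : IsNorm nrm) {S : Set (ℝ × ℝ)} (hS : S.Nonempty) (p q : ℝ × ℝ) :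
    nrmDist nrm p S ≤ nrmDist nrm q S + nrm (p - q) := by
  have : nrmDist nrm p S - nrm (p - q) ≤ nrmDist nrm q S := by
    apply le_nd hS
    intro r hr
    have h1 : nrmDist nrm p S ≤ nrm (p - r) := nd_le h hr
    have h2 : nrm (p - r) ≤ nrm (p - q) + nrm (q - r) := by
      have := h.2.2 (p - q) (q - r); simpa using this
    linarith
  linarith

/-- continuity of the distance function in the point -/
lemma nd_cont (h : IsNorm nrm) {S : Set (ℝ × ℝ)} (hS : S.Nonempty) :
    Continuous (fun p => nrmDist nrm p S) := by
  set C := nrm (1, 0) + nrm (0, 1) with hC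
  have hC0 : 0 ≤ C := by
    have := nrm_nonneg h ((1:ℝ),(0:ℝ)); have := nrm_nonneg h ((0:ℝ),(1:ℝ)); linarith
  have : LipschitzWith (Real.toNNReal C) (fun p => nrmDist nrm p S) := by
    apply LipschitzWith.of_dist_le_mul
    intro x y
    rw [Real.dist_eq, dist_eq_norm]
    have h1 := nd_lip h hS x y
    have h2 := nd_lip h hS y x
    rw [nrm_sub_rev h y x] at h2
    have h3 : |nrmDist nrm x S - nrmDist nrm y S| ≤ nrm (x - y) :=
      abs_le.2 ⟨by linarith, by linarith⟩
    calc |nrmDist nrm x S - nrmDist nrm y S| ≤ nrm (x - y) := h3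
      _ ≤ C * ‖x - y‖ := nrm_le_std h _
      _ ≤ Real.toNNReal C * ‖x - y‖ := by
          gcongr; exact (Real.coe_toNNReal C hC0).symm.le
  exact this.continuous

/-- the convex hull of two rays from a -/
lemma hull_eq (a b c : ℝ × ℝ) :
    convexHull ℝ (Ray a b ∪ Ray a c)
      = {p | ∃ β γ : ℝ, 0 ≤ β ∧ 0 ≤ γ ∧ p = a + β • b + γ • c} := by
  apply le_antisymm
  · apply convexHull_min
    · rintro p (⟨t, ht, rfl⟩ | ⟨t, ht, rfl⟩)
      · exact ⟨t, 0, ht, le_refl _, by module⟩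
      · exact ⟨0, t, le_refl _, ht, by module⟩
    · rintro x ⟨β1, γ1, hβ1, hγ1, rfl⟩ y ⟨β2, γ2, hβ2, hγ2, rfl⟩ u v hu hv huv
      refine ⟨u * β1 + v * β2, u * γ1 + v * γ2, by positivity, by positivity, ?_⟩
      match_scalars <;> ring_nf <;> nlinarith [huv]
  · rintro p ⟨β, γ, hβ, hγ, rfl⟩
    have h1 : a + (2 * β) • b ∈ Ray a b ∪ Ray a c := Or.inl ⟨2 * β, by linarith, rfl⟩
    have h2 : a + (2 * γ) • c ∈ Ray a b ∪ Ray a c := Or.inr ⟨2 * γ, by linarith, rfl⟩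
    have := (convex_convexHull ℝ (Ray a b ∪ Ray a c))
      (subset_convexHull ℝ _ h1) (subset_convexHull ℝ _ h2)
      (by norm_num : (0:ℝ) ≤ 1/2) (by norm_num : (0:ℝ) ≤ 1/2) (by norm_num)
    convert this using 1
    module

end aux

/-- auxiliary: distance from a point of the segment to the first ray -/
noncomputable def DBf (nrm : ℝ × ℝ → ℝ) (a b c : ℝ × ℝ) (s : ℝ) : ℝ :=
  nrmDist nrm (a + ((1 - s) • b + s • c)) (Ray a b)

/-- auxiliary: distance from a point of the segment to the second ray -/
noncomputable def DCf (nrm : ℝ × ℝ → ℝ) (a b c : ℝ × ℝ) (s : ℝ) : ℝ :=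
  nrmDist nrm (a + ((1 - s) • b + s • c)) (Ray a c)

theorem stmt_15 (nrm : ℝ × ℝ → ℝ) (hnrm : IsNorm nrm)
    (M : Set (ℝ × ℝ)) (hM : M = {x | nrm x ≤ 1})
    (a b c : ℝ × ℝ) (hbc : LinearIndependent ℝ ![b, c]) :
    -- a point of the convex hull of the two rays is equidistant from them iff some
    -- disk p + λM, λ ≥ 0, touches both rays
    (∀ p ∈ convexHull ℝ (Ray a b ∪ Ray a c),
      (nrmDist nrm p (Ray a b) = nrmDist nrm p (Ray a c) ↔
        ∃ lam : ℝ, 0 ≤ lam ∧ lam = nrmDist nrm p (Ray a b) ∧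
          lam = nrmDist nrm p (Ray a c))) ∧
    -- consequently, the Glogovskij bisector is a closed ray emanating from a
    (∃ d : ℝ × ℝ, d ≠ 0 ∧
      {p ∈ convexHull ℝ (Ray a b ∪ Ray a c) |
        nrmDist nrm p (Ray a b) = nrmDist nrm p (Ray a c)} = Ray a d) := by
  constructor
  · intro p _
    constructor
    · intro he
      exact ⟨nrmDist nrm p (Ray a b), nd_nonneg hnrm p _, rfl, he⟩
    · rintro ⟨lam, _, h1, h2⟩
      rw [← h1, ← h2]
  -- the determinant is nonzero
  have key := LinearIndependent.pair_iff.mp hbc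
  have hD : b.1 * c.2 - b.2 * c.1 ≠ 0 := by
    intro hd
    have e1 : c.2 • b + (-b.2) • c = 0 := by
      ext
      · show c.2 * b.1 + (-b.2) * c.1 = 0
        linear_combination hd
      · show c.2 * b.2 + (-b.2) * c.2 = 0
        ring
    obtain ⟨hc2, hb2⟩ := key _ _ e1
    have e2 : (-c.1) • b + b.1 • c = 0 := by
      ext
      · show (-c.1) * b.1 + b.1 * c.1 = 0
        ring
      · show (-c.1) * b.2 + b.1 * c.2 = 0
        linear_combination hd
    obtain ⟨hc1, hb1⟩ := key _ _ e2
    have hb : b = 0 := by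
      have h1 : b.1 = 0 := hb1
      have h2 : b.2 = 0 := by linarith [neg_eq_zero.mp hb2]
      exact Prod.ext h1 h2
    have := (key 1 0 (by rw [hb]; simp)).1
    norm_num at this
  obtain ⟨κB, hκB, hκBle⟩ := coord_lb hnrm hD
  have hD' : c.1 * b.2 - c.2 * b.1 ≠ 0 := fun h' => hD (by linarith)
  obtain ⟨κC, hκC, hκCle⟩ := coord_lb hnrm hD'
  -- lower bounds for the distances of a point in the cone to the rays
  have lbC : ∀ β γ : ℝ, 0 ≤ β → κB * β ≤ nrmDist nrm (a + (β • b + γ • c)) (Ray a c) := by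
    intro β γ hβ
    apply le_nd (ray_nonempty a c)
    rintro q ⟨u, hu, rfl⟩
    have e : a + (β • b + γ • c) - (a + u • c) = β • b + (γ - u) • c := by module
    rw [e]
    have := hκBle β (γ - u)
    rwa [abs_of_nonneg hβ] at this
  have lbB : ∀ β γ : ℝ, 0 ≤ γ → κC * γ ≤ nrmDist nrm (a + (β • b + γ • c)) (Ray a b) := by
    intro β γ hγ
    apply le_nd (ray_nonempty a b)
    rintro q ⟨u, hu, rfl⟩
    have e : a + (β • b + γ • c) - (a + u • b) = γ • c + (β - u) • b := by module
    rw [e]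
    have := hκCle γ (β - u)
    rwa [abs_of_nonneg hγ] at this
  -- values at the endpoints
  have hDB0 : DBf nrm a b c 0 = 0 := by
    have hpt : a + ((1 - (0:ℝ)) • b + (0:ℝ) • c) = a + b := by module
    rw [DBf, hpt]
    exact nd_mem_zero hnrm (tip_mem_ray a b)
  have hDC1 : DCf nrm a b c 1 = 0 := by
    have hpt : a + ((1 - (1:ℝ)) • b + (1:ℝ) • c) = a + c := by module
    rw [DCf, hpt]
    exact nd_mem_zero hnrm (tip_mem_ray a c)
  have hDBpos : ∀ s : ℝ, 0 ≤ s → κC * s ≤ DBf nrm a b c s := by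
    intro s h1
    rw [DBf]
    exact lbB (1 - s) s h1
  have hDCpos : ∀ s : ℝ, s ≤ 1 → κB * (1 - s) ≤ DCf nrm a b c s := by
    intro s h1
    rw [DCf]
    exact lbC (1 - s) s (by linarith)
  -- strict monotonicity
  have monoB : ∀ s1 s2 : ℝ, 0 ≤ s1 → s1 < s2 → s2 ≤ 1 → DBf nrm a b c s1 < DBf nrm a b c s2 := by
    intro s1 s2 h1 h12 h2
    have hs2 : 0 < s2 := lt_of_le_of_lt h1 h12
    have hpos : 0 < DBf nrm a b c s2 :=
      lt_of_lt_of_le (mul_pos hκC hs2) (hDBpos s2 hs2.le)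
    rcases eq_or_lt_of_le h1 with rfl | h1'
    · rw [hDB0]; exact hpos
    · have hθ0 : (0:ℝ) < s1 / s2 := div_pos h1' hs2
      have hθ1 : s1 / s2 < 1 := (div_lt_one hs2).2 h12
      have hcombo : a + ((1 - s1) • b + s1 • c)
          = (s1 / s2) • (a + ((1 - s2) • b + s2 • c)) + (1 - s1 / s2) • (a + b) := by
        match_scalars <;> field_simp <;> ring
      have hconv := nd_convex hnrm (ray_nonempty a b) (ray_convex a b) hθ0.le hθ1.le
        (a + ((1 - s2) • b + s2 • c)) (a + b)
      rw [← hcombo, nd_mem_zero hnrm (tip_mem_ray a b)] at hconv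
      simp only [DBf] at hpos ⊢
      nlinarith [hconv, hpos, hθ1]
  have monoC : ∀ s1 s2 : ℝ, 0 ≤ s1 → s1 < s2 → s2 ≤ 1 → DCf nrm a b c s2 < DCf nrm a b c s1 := by
    intro s1 s2 h1 h12 h2
    have hs1 : s1 < 1 := lt_of_lt_of_le h12 h2
    have hpos : 0 < DCf nrm a b c s1 :=
      lt_of_lt_of_le (mul_pos hκB (by linarith)) (hDCpos s1 hs1.le)
    rcases eq_or_lt_of_le h2 with rfl | h2'
    · rw [hDC1]; exact hpos
    · have hd1 : (0:ℝ) < 1 - s1 := by linarith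
      have hθ0 : (0:ℝ) < (1 - s2) / (1 - s1) := div_pos (by linarith) hd1
      have hθ1 : (1 - s2) / (1 - s1) < 1 := (div_lt_one hd1).2 (by linarith)
      have hcombo : a + ((1 - s2) • b + s2 • c)
          = ((1 - s2) / (1 - s1)) • (a + ((1 - s1) • b + s1 • c))
            + (1 - (1 - s2) / (1 - s1)) • (a + c) := by
        match_scalars <;> field_simp <;> ring
      have hconv := nd_convex hnrm (ray_nonempty a c) (ray_convex a c) hθ0.le hθ1.le
        (a + ((1 - s1) • b + s1 • c)) (a + c)
      rw [← hcombo, nd_mem_zero hnrm (tip_mem_ray a c)] at hconv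
      simp only [DCf] at hpos ⊢
      nlinarith [hconv, hpos, hθ1]
  -- continuity
  have hg : Continuous (fun s => DBf nrm a b c s - DCf nrm a b c s) := by
    have hc1 : Continuous (fun s : ℝ => a + ((1 - s) • b + s • c)) := by
      apply continuous_const.add
      exact ((continuous_const.sub continuous_id).smul continuous_const).add
        (continuous_id.smul continuous_const)
    simp only [DBf, DCf]
    exact ((nd_cont hnrm (ray_nonempty a b)).comp hc1).sub
      ((nd_cont hnrm (ray_nonempty a c)).comp hc1)
  have hg0 : DBf nrm a b c 0 - DCf nrm a b c 0 < 0 := by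
    have := hDCpos 0 zero_le_one
    rw [hDB0]
    nlinarith
  have hg1 : 0 < DBf nrm a b c 1 - DCf nrm a b c 1 := by
    have := hDBpos 1 zero_le_one
    rw [hDC1]
    nlinarith
  -- IVT
  obtain ⟨sstar, hmem, hstar⟩ : ∃ s ∈ Set.Icc (0:ℝ) 1,
      DBf nrm a b c s - DCf nrm a b c s = 0 := by
    have hsub := intermediate_value_Icc (zero_le_one (α := ℝ)) hg.continuousOn
    have h0 : (0:ℝ) ∈ Set.Icc (DBf nrm a b c 0 - DCf nrm a b c 0)
        (DBf nrm a b c 1 - DCf nrm a b c 1) := ⟨hg0.le, hg1.le⟩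
    obtain ⟨s, hs, hgs⟩ := hsub h0
    exact ⟨s, hs, hgs⟩
  have hstareq : DBf nrm a b c sstar = DCf nrm a b c sstar := by linarith
  -- uniqueness of the equidistant parameter
  have huniq : ∀ s : ℝ, 0 ≤ s → s ≤ 1 → DBf nrm a b c s = DCf nrm a b c s → s = sstar := by
    intro s h0 h1 he
    by_contra hne
    rcases lt_or_gt_of_ne hne with hlt | hgt
    · have hB := monoB s sstar h0 hlt hmem.2
      have hC := monoC s sstar h0 hlt hmem.2
      nlinarith
    · have hB := monoB sstar s hmem.1 hgt h1
      have hC := monoC sstar s hmem.1 hgt h1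
      nlinarith
  -- the bisector ray
  refine ⟨(1 - sstar) • b + sstar • c, ?_, ?_⟩
  · intro hd0
    obtain ⟨h1, h2⟩ := key _ _ hd0
    rw [h2] at h1
    norm_num at h1
  · ext p
    simp only [Set.mem_setOf_eq]
    constructor
    · rintro ⟨hp, he⟩
      rw [hull_eq] at hp
      obtain ⟨β, γ, hβ, hγ, rfl⟩ := hp
      rcases eq_or_lt_of_le (by linarith : (0:ℝ) ≤ β + γ) with hr | hr
      · have hβ0 : β = 0 := by linarith
        have hγ0 : γ = 0 := by linarith
        refine ⟨0, le_rfl, ?_⟩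
        rw [hβ0, hγ0]
        module
      · have hs0 : 0 ≤ γ / (β + γ) := by positivity
        have hs1 : γ / (β + γ) ≤ 1 := by
          rw [div_le_one hr]
          linarith
        have hrepr : a + β • b + γ • c
            = a + (β + γ) • ((1 - γ / (β + γ)) • b + (γ / (β + γ)) • c) := by
          match_scalars <;> field_simp <;> ring
        have hBB : nrmDist nrm (a + β • b + γ • c) (Ray a b)
            = (β + γ) * DBf nrm a b c (γ / (β + γ)) := by
          rw [hrepr, DBf]
          exact nd_homog hnrm a _ b (le_of_lt hr)
        have hCC : nrmDist nrm (a + β • b + γ • c) (Ray a c)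
            = (β + γ) * DCf nrm a b c (γ / (β + γ)) := by
          rw [hrepr, DCf]
          exact nd_homog hnrm a _ c (le_of_lt hr)
        rw [hBB, hCC] at he
        have heq : DBf nrm a b c (γ / (β + γ)) = DCf nrm a b c (γ / (β + γ)) :=
          mul_left_cancel₀ (ne_of_gt hr) he
        have hss := huniq _ hs0 hs1 heq
        refine ⟨β + γ, hr.le, ?_⟩
        rw [hrepr, hss]
    · rintro ⟨t, ht, rfl⟩
      have h1 : nrmDist nrm (a + t • ((1 - sstar) • b + sstar • c)) (Ray a b)
          = t * DBf nrm a b c sstar := by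
        rw [DBf]; exact nd_homog hnrm a _ b ht
      have h2 : nrmDist nrm (a + t • ((1 - sstar) • b + sstar • c)) (Ray a c)
          = t * DCf nrm a b c sstar := by
        rw [DCf]; exact nd_homog hnrm a _ c ht
      constructor
      · rw [hull_eq]
        refine ⟨t * (1 - sstar), t * sstar, ?_, ?_, by module⟩
        · have := hmem.2; nlinarith
        · exact mul_nonneg ht hmem.1
      · rw [h1, h2, hstareq]
end
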